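/- arXiv:2211.11634 — 4 statements merged into one kernel-verified Lean document; each statement's English description precedes it below -/
import Mathlib

section
/- The relation ≼ on B_χ(k,n) defined by x ≼ y if and only if x ≤ g(y) componentwise for some g ∈ G is a partial order. -/
/-- Action of a permutation on tuples: `g(x) = (x_{g⁻¹(1)},…,x_{g⁻¹(k)})`. -/
def act {k n : ℕ} (g : Equiv.Perm (Fin k)) (x : Fin k → Fin n) : Fin k → Fin n :=
  fun i => x (g⁻¹ i)

/-- `B_χ(k,n)`: lexicographically minimal orbit representatives `x` whose isotropy
group is contained in `ker χ`. -/
def Bchi (k n : ℕ) (G : Subgroup (Equiv.Perm (Fin k))) (χ : G →* ℂˣ) :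
    Set (Fin k → Fin n) :=
  {x | (∀ g : G, toLex x ≤ toLex (act (g : Equiv.Perm (Fin k)) x)) ∧
       (∀ g : G, act (g : Equiv.Perm (Fin k)) x = x → χ g = 1)}

/-- The relation `x ≼ y ↔ ∃ g ∈ G, x ≤ g(y)` componentwise is a partial order on
`B_χ(k,n)`: reflexive, antisymmetric and transitive. -/
theorem stmt0 (k n : ℕ) (G : Subgroup (Equiv.Perm (Fin k))) (χ : G →* ℂˣ)
    (r : (Fin k → Fin n) → (Fin k → Fin n) → Prop)
    (hr : ∀ x y, r x y ↔ ∃ g : G, ∀ i, x i ≤ act (g : Equiv.Perm (Fin k)) y i) :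
    (∀ x ∈ Bchi k n G χ, r x x) ∧
    (∀ x ∈ Bchi k n G χ, ∀ y ∈ Bchi k n G χ, r x y → r y x → x = y) ∧
    (∀ x ∈ Bchi k n G χ, ∀ y ∈ Bchi k n G χ, ∀ z ∈ Bchi k n G χ,
      r x y → r y z → r x z) := by
  have act_act : ∀ (g h : Equiv.Perm (Fin k)) (z : Fin k → Fin n),
      act g (act h z) = act (g * h) z := by
    intro g h z
    funext i
    simp [act, mul_inv_rev]
  have act_one : ∀ (x : Fin k → Fin n), act 1 x = x := by
    intro x; funext i; simp [act]
  have fix : ∀ (σ : Equiv.Perm (Fin k)) (x : Fin k → Fin n),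
      (∀ i, x i ≤ act σ x i) → act σ x = x := by
    intro σ x h
    have hsum : ∑ i, (x i : ℕ) = ∑ i, ((act σ x i : Fin n) : ℕ) := by
      unfold act
      exact (Equiv.sum_comp σ⁻¹ (fun i => ((x i : Fin n) : ℕ))).symm
    have h' : ∀ i ∈ Finset.univ, ((x i : Fin n) : ℕ) ≤ ((act σ x i : Fin n) : ℕ) :=
      fun i _ => h i
    have := (Finset.sum_eq_sum_iff_of_le h').mp (by simpa using hsum)
    funext i
    exact (Fin.ext ((this i (Finset.mem_univ i)).symm))
  refine ⟨?_, ?_, ?_⟩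
  · intro x _
    rw [hr]
    exact ⟨1, fun i => by simp [act_one]⟩
  · intro x hx y hy hxy hyx
    rw [hr] at hxy hyx
    obtain ⟨g, hg⟩ := hxy
    obtain ⟨h, hh⟩ := hyx
    have hle : ∀ i, x i ≤ act ((g : Equiv.Perm (Fin k)) * (h : Equiv.Perm (Fin k))) x i := by
      intro i
      refine le_trans (hg i) ?_
      rw [← act_act]
      exact hh ((g : Equiv.Perm (Fin k))⁻¹ i)
    have hfix : act ((g : Equiv.Perm (Fin k)) * (h : Equiv.Perm (Fin k))) x = x := fix _ _ hle
    have hxgy : x = act (g : Equiv.Perm (Fin k)) y := by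
      funext i
      refine le_antisymm (hg i) ?_
      have : act (g : Equiv.Perm (Fin k)) y i ≤ act ((g : Equiv.Perm (Fin k)) * (h : Equiv.Perm (Fin k))) x i := by
        rw [← act_act]
        exact hh ((g : Equiv.Perm (Fin k))⁻¹ i)
      rw [hfix] at this
      exact this
    have hy_eq : y = act ((g : Equiv.Perm (Fin k)))⁻¹ x := by
      rw [hxgy, act_act]
      simp [act_one]
    -- lex minimality
    have h1 : toLex x ≤ toLex y := by
      have := hx.1 g⁻¹
      rw [hy_eq]
      simpa using this
    have h2 : toLex y ≤ toLex x := by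
      have := hy.1 g
      rwa [← hxgy] at this
    exact toLex.injective (le_antisymm h1 h2)
  · intro x _ y _ z _ hxy hyz
    rw [hr] at hxy hyz ⊢
    obtain ⟨g, hg⟩ := hxy
    obtain ⟨h, hh⟩ := hyz
    refine ⟨g * h, fun i => ?_⟩
    refine le_trans (hg i) ?_
    have : (((g * h : G) : Equiv.Perm (Fin k))) = (g : Equiv.Perm (Fin k)) * (h : Equiv.Perm (Fin k)) := rfl
    rw [this, ← act_act]
    exact hh ((g : Equiv.Perm (Fin k))⁻¹ i)
end

section
/- The map p : [n]^k → B(k,n) sending x to the lexicographically minimal element of its G-orbit is order preserving, where [n]^k carries the componentwise order and B(k,n) carries the order x ≼ y iff x ≤ g(y) for some g ∈ G. -/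
/-- The map `p` sending a tuple to the lexicographically minimal element of its
`G`-orbit is order preserving from the componentwise order on `[n]^k` to the order
`x ≼ y ↔ ∃ g ∈ G, x ≤ g(y)` on `B(k,n)`. -/
theorem stmt2 (k n : ℕ) (G : Subgroup (Equiv.Perm (Fin k)))
    (p : (Fin k → Fin n) → (Fin k → Fin n))
    (hp1 : ∀ x, ∃ g : G, p x = act (g : Equiv.Perm (Fin k)) x)
    (hp2 : ∀ x, ∀ g : G, toLex (p x) ≤ toLex (act (g : Equiv.Perm (Fin k)) x)) :
    ∀ x y : Fin k → Fin n, (∀ i, x i ≤ y i) →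
      ∃ g : G, ∀ i, p x i ≤ act (g : Equiv.Perm (Fin k)) (p y) i := by
  intro x y hxy
  obtain ⟨h, hh⟩ := hp1 y
  obtain ⟨g, hg⟩ := hp1 x
  refine ⟨g * h⁻¹, fun i => ?_⟩
  have key : act ((g * h⁻¹ : G) : Equiv.Perm (Fin k)) (p y)
      = act (g : Equiv.Perm (Fin k)) y := by
    rw [hh]; funext j; simp [act, mul_assoc]
  rw [key, hg]
  exact hxy _
end

section
/- The poset B_{1_G}(k,n) is graded with rank function ρ(x) = Σ_{i=1}^k (x_i − 1): it has minimum (1,…,1), maximum (n,…,n), and whenever x ⋖ y is a covering relation in B_{1_G}(k,n), ρ(y) = ρ(x) + 1. -/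
/-- `B_{1_G}(k,n)`: lexicographically minimal `G`-orbit representatives in `[n]^k`. -/
def Btriv (k n : ℕ) (G : Subgroup (Equiv.Perm (Fin k))) : Set (Fin k → Fin n) :=
  {x | ∀ g : G, toLex x ≤ toLex (act (g : Equiv.Perm (Fin k)) x)}

open Equiv

/-- `ρ`, with the entries `1,…,n` encoded as `0,…,n-1` in `Fin n`. -/
def rank {ι : Type*} [Fintype ι] {n : ℕ} (x : ι → Fin n) : ℕ := ∑ i, (x i : ℕ)

lemma rank_mono {ι : Type*} [Fintype ι] {n : ℕ} {x y : ι → Fin n} (h : x ≤ y) :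
    rank x ≤ rank y :=
  Finset.sum_le_sum fun i _ => h i

lemma exists_le_rank_add_one_eq {ι : Type*} [Fintype ι] [DecidableEq ι] {n : ℕ}
    {x y : ι → Fin n} (hxy : x < y) :
    ∃ w, x ≤ w ∧ w ≤ y ∧ rank w + 1 = rank y := by
  obtain ⟨hle, i, hi⟩ := Pi.lt_def.1 hxy
  have hi' : (x i : ℕ) < y i := hi
  let w := Function.update y i ⟨y i - 1, by omega⟩
  have hwi : (w i : ℕ) = y i - 1 := by simp [w]
  have hw_ne : ∀ j ≠ i, w j = y j := fun j hj => Function.update_of_ne hj _ _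
  refine ⟨w, fun j => ?_, fun j => ?_, ?_⟩
  · rcases eq_or_ne j i with rfl | hj
    · rw [Fin.le_def, hwi]; omega
    · rw [hw_ne j hj]; exact hle j
  · rcases eq_or_ne j i with rfl | hj
    · rw [Fin.le_def, hwi]; omega
    · rw [hw_ne j hj]
  · have hrest : ∑ j ∈ {i}ᶜ, (w j : ℕ) = ∑ j ∈ {i}ᶜ, (y j : ℕ) :=
      Finset.sum_congr rfl fun j hj => by rw [hw_ne j (by simpa using hj)]
    unfold rank
    rw [Fintype.sum_eq_add_sum_compl i, Fintype.sum_eq_add_sum_compl i (fun j => (y j : ℕ)),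
      hrest, hwi]
    omega

section Action

variable {k n : ℕ}

@[simp]
lemma act_one (x : Fin k → Fin n) : act 1 x = x := rfl

lemma act_mul (g h : Perm (Fin k)) (x : Fin k → Fin n) : act (g * h) x = act g (act h x) := by
  funext i; simp [act, mul_inv_rev]

lemma act_const (g : Perm (Fin k)) (c : Fin n) : act g (fun _ => c) = fun _ => c := rfl

lemma act_mono (g : Perm (Fin k)) {x y : Fin k → Fin n} (h : x ≤ y) : act g x ≤ act g y :=
  fun i => h (g⁻¹ i)

lemma rank_act (g : Perm (Fin k)) (x : Fin k → Fin n) : rank (act g x) = rank x :=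
  Fintype.sum_equiv g⁻¹ _ _ fun _ => rfl

end Action

section Representatives

variable {k n : ℕ} {G : Subgroup (Perm (Fin k))}

lemma const_mem_Btriv (c : Fin n) : (fun _ => c) ∈ Btriv k n G := fun g => by
  rw [act_const]

lemma exists_act_mem_Btriv (w : Fin k → Fin n) :
    ∃ h : G, act (h : Perm (Fin k)) w ∈ Btriv k n G := by
  obtain ⟨h, hmin⟩ := Finite.exists_min fun h : G => toLex (act (h : Perm (Fin k)) w)
  refine ⟨h, fun g => ?_⟩
  rw [← act_mul]
  exact hmin (g * h)

lemma eq_of_act_eq {x y : Fin k → Fin n} (hx : x ∈ Btriv k n G) (hy : y ∈ Btriv k n G)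
    {g : G} (hg : act (g : Perm (Fin k)) y = x) : x = y := by
  have hyx : toLex y ≤ toLex x := hg ▸ hy g
  have hxy : toLex x ≤ toLex y := by
    simpa [← hg, ← act_mul] using hx g⁻¹
  exact toLex.injective (le_antisymm hxy hyx)

end Representatives

/-- The order `≼` of `B_{1_G}(k,n)`. -/
def OrbitLE {k n : ℕ} (G : Subgroup (Perm (Fin k))) (x y : Fin k → Fin n) : Prop :=
  ∃ g : G, x ≤ act (g : Perm (Fin k)) y

lemma rank_eq_add_one_of_covBy {k n : ℕ} {G : Subgroup (Perm (Fin k))}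
    {x y : Fin k → Fin n} (hx : x ∈ Btriv k n G) (hy : y ∈ Btriv k n G) (hxy : OrbitLE G x y)
    (hne : x ≠ y)
    (hcov : ¬ ∃ z ∈ Btriv k n G, z ≠ x ∧ z ≠ y ∧ OrbitLE G x z ∧ OrbitLE G z y) :
    rank y = rank x + 1 := by
  by_contra hrank
  obtain ⟨g, hg⟩ := hxy
  have hlt : x < act (g : Perm (Fin k)) y :=
    lt_of_le_of_ne hg fun h => hne (eq_of_act_eq hx hy h.symm)
  obtain ⟨w, hxw, hwy, hw⟩ := exists_le_rank_add_one_eq hlt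
  rw [rank_act] at hw
  have hrank_xw : rank x < rank w := by have := rank_mono hxw; omega
  obtain ⟨h, hz⟩ := exists_act_mem_Btriv (G := G) w
  refine hcov ⟨_, hz, fun h' => ?_, fun h' => ?_, ⟨h⁻¹, ?_⟩, ⟨h * g, ?_⟩⟩
  · have := congrArg rank h'; rw [rank_act] at this; omega
  · have := congrArg rank h'; rw [rank_act] at this; omega
  · simpa [← act_mul] using hxw
  · simpa [act_mul] using act_mono (h : Perm (Fin k)) hwy

/-- `B_{1_G}(k,n)` is graded with rank function `ρ(x) = Σᵢ (xᵢ - 1)` (here tuples with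
entries in `{1,…,n}` are modeled by `Fin n`, so `ρ(x) = Σᵢ xᵢ`): it has minimum
`(1,…,1)`, maximum `(n,…,n)`, and covering relations raise the rank by exactly one. -/
theorem stmt3 (k n : ℕ) (hn : 0 < n) (G : Subgroup (Equiv.Perm (Fin k)))
    (r : (Fin k → Fin n) → (Fin k → Fin n) → Prop)
    (hr : ∀ x y, r x y ↔ ∃ g : G, ∀ i, x i ≤ act (g : Equiv.Perm (Fin k)) y i)
    (bot top : Fin k → Fin n)
    (hbot : bot = fun _ => (⟨0, hn⟩ : Fin n))
    (htop : top = fun _ => (⟨n - 1, by omega⟩ : Fin n)) :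
    (bot ∈ Btriv k n G ∧ ∀ x ∈ Btriv k n G, r bot x) ∧
    (top ∈ Btriv k n G ∧ ∀ x ∈ Btriv k n G, r x top) ∧
    (∀ x ∈ Btriv k n G, ∀ y ∈ Btriv k n G,
      r x y → x ≠ y → (¬ ∃ z ∈ Btriv k n G, z ≠ x ∧ z ≠ y ∧ r x z ∧ r z y) →
      (∑ i, ((y i : ℕ))) = (∑ i, ((x i : ℕ))) + 1) := by
  obtain rfl : r = OrbitLE G := funext₂ fun x y => propext (hr x y)
  subst hbot htop
  refine ⟨⟨const_mem_Btriv _, fun x _ => ⟨1, fun i => Nat.zero_le _⟩⟩,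
    ⟨const_mem_Btriv _, fun x _ => ⟨1, fun i => Nat.le_sub_one_of_lt (x i).isLt⟩⟩, ?_⟩
  exact fun _ hx _ hy => rank_eq_add_one_of_covBy hx hy
end

section
/- Let G = S_k and x ≼ y in B_{1_{S_k}}(k,n), i.e., x, y are weakly increasing tuples in [n]^k with x_i ≤ y_i for all i. Set w = (Σ_{i=x_1}^{y_1} e_i) ⊗ … ⊗ (Σ_{i=x_k}^{y_k} e_i). Then the support of P_{1_{S_k}}(w) in the basis {P_{1_{S_k}}(e_z) : z weakly increasing} is exactly the interval [x,y] = {z weakly increasing : x ≼ z ≼ y}, where z ≼ z' iff z ≤ g(z') for some g ∈ S_k. -/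
/-!
`(P w)(z)` is `1/k!` times the number of permutations `g` with `x ≤ z ∘ g ≤ y`. For sorted
tuples, `a ≤ b ∘ g` for some `g` already forces `a ≤ b`: given `i`, pigeonhole yields `j ≥ i`
with `g j ≤ i`, so `a i ≤ a j ≤ b (g j) ≤ b i`. Hence such a `g` exists iff `x ≤ z ≤ y`.
-/

/-- The `i + 1` positions that `g` sends into `Iic i` cannot all lie in `Iio i`. -/
lemma Equiv.Perm.exists_le_and_apply_le {k : ℕ} (g : Equiv.Perm (Fin k)) (i : Fin k) :
    ∃ j, i ≤ j ∧ g j ≤ i := by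
  have hcard : (Finset.Iio i).card < ((Finset.Iic i).image g.symm).card := by
    rw [Finset.card_image_of_injective _ g.symm.injective, Fin.card_Iic, Fin.card_Iio]
    exact Nat.lt_succ_self _
  obtain ⟨j, hj, hji⟩ := Finset.exists_mem_notMem_of_card_lt_card hcard
  obtain ⟨m, hm, rfl⟩ := Finset.mem_image.mp hj
  exact ⟨g.symm m, not_lt.mp (by simpa using hji), by simpa using hm⟩

lemma Monotone.exists_perm_le_comp_iff {k : ℕ} {α : Type*} [Preorder α] {a b : Fin k → α}
    (ha : Monotone a) (hb : Monotone b) :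
    (∃ g : Equiv.Perm (Fin k), ∀ i, a i ≤ b (g i)) ↔ ∀ i, a i ≤ b i := by
  refine ⟨fun ⟨g, h⟩ i => ?_, fun h => ⟨1, h⟩⟩
  obtain ⟨j, hij, hgj⟩ := g.exists_le_and_apply_le i
  exact (ha hij).trans ((h j).trans (hb hgj))

lemma sum_boole_ne_zero_iff {ι R : Type*} [Fintype ι] [AddCommMonoidWithOne R] [CharZero R]
    (p : ι → Prop) [DecidablePred p] :
    (∑ i, if p i then (1 : R) else 0) ≠ 0 ↔ ∃ i, p i := by
  rw [Finset.sum_boole, Nat.cast_ne_zero, Finset.card_ne_zero, Finset.filter_nonempty_iff]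
  simp only [Finset.mem_univ, true_and]

lemma Monotone.exists_perm_mem_box_iff {k : ℕ} {α : Type*} [Preorder α] {x y z : Fin k → α}
    (hx : Monotone x) (hy : Monotone y) (hz : Monotone z) :
    (∃ g : Equiv.Perm (Fin k), ∀ i, x i ≤ z (g i) ∧ z (g i) ≤ y i) ↔
      (∃ g : Equiv.Perm (Fin k), ∀ i, x i ≤ z (g i)) ∧
        (∃ g : Equiv.Perm (Fin k), ∀ i, z i ≤ y (g i)) := by
  constructor
  · rintro ⟨g, hg⟩
    exact ⟨⟨g, fun i => (hg i).1⟩, ⟨g⁻¹, fun i => by simpa using (hg (g⁻¹ i)).2⟩⟩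
  · rintro ⟨hxz, hzy⟩
    rw [hx.exists_perm_le_comp_iff hz] at hxz
    rw [hz.exists_perm_le_comp_iff hy] at hzy
    exact ⟨1, fun i => ⟨hxz i, hzy i⟩⟩

open scoped Classical in
theorem stmt17_general (k n : ℕ) (x y : Fin k → Fin n)
    (hx : Monotone x) (hy : Monotone y)
    (w : (Fin k → Fin n) → ℂ)
    (hw : w = fun z => ∏ i, (if x i ≤ z i ∧ z i ≤ y i then (1 : ℂ) else 0))
    (Pw : (Fin k → Fin n) → ℂ)
    (hPw : Pw = fun u => (k.factorial : ℂ)⁻¹ *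
      ∑ g : Equiv.Perm (Fin k), w (fun i => u (g i))) :
    ∀ z : Fin k → Fin n, Monotone z →
      (Pw z ≠ 0 ↔
        ((∃ g : Equiv.Perm (Fin k), ∀ i, x i ≤ z (g i)) ∧
         (∃ g : Equiv.Perm (Fin k), ∀ i, z i ≤ y (g i)))) := by
  intro z hz
  subst hw hPw
  simp only [Finset.prod_boole, Finset.mem_univ, forall_const]
  rw [mul_ne_zero_iff, sum_boole_ne_zero_iff, ← hx.exists_perm_mem_box_iff hy hz]
  simp [Nat.factorial_ne_zero]

open scoped Classical in
/-- Let `x ≼ y` be weakly increasing tuples in `[n]^k` with `xᵢ ≤ yᵢ` for all `i`, and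
let `w = (Σ_{i=x₁}^{y₁} eᵢ) ⊗ … ⊗ (Σ_{i=x_k}^{y_k} eᵢ)`. Then the support of the
symmetrization `P_{1_{S_k}}(w)` (in the basis `{P_{1_{S_k}}(e_z) : z` weakly
increasing`}`, i.e. the weakly increasing `z` with `(P_{1_{S_k}} w)(z) ≠ 0`) is
exactly the interval `[x,y] = {z : x ≼ z ≼ y}`, where `z ≼ z' ↔ z ≤ g(z')`
componentwise for some `g ∈ S_k`. -/
theorem stmt17 (k n : ℕ) (x y : Fin k → Fin n)
    (hx : Monotone x) (hy : Monotone y) (hxy : ∀ i, x i ≤ y i)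
    (w : (Fin k → Fin n) → ℂ)
    (hw : w = fun z => ∏ i, (if x i ≤ z i ∧ z i ≤ y i then (1 : ℂ) else 0))
    (Pw : (Fin k → Fin n) → ℂ)
    (hPw : Pw = fun u => (k.factorial : ℂ)⁻¹ *
      ∑ g : Equiv.Perm (Fin k), w (fun i => u (g i))) :
    ∀ z : Fin k → Fin n, Monotone z →
      (Pw z ≠ 0 ↔
        ((∃ g : Equiv.Perm (Fin k), ∀ i, x i ≤ z (g i)) ∧
         (∃ g : Equiv.Perm (Fin k), ∀ i, z i ≤ y (g i)))) :=
  stmt17_general k n x y hx hy w hw Pw hPw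
end
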